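/- arXiv:1701.01357 — 2 statements merged into one kernel-verified Lean document; each statement's English description precedes it below -/
import Mathlib

section
/- Let n be a prime number, S ⊆ {1, …, ⌊n/2⌋}, G = C_n(S), and let k ≥ 1 be an integer such that G has at least one independent set of cardinality k + 1. Define the simple graph H on vertex set ℤ/nℤ in which distinct u, v are adjacent if and only if there exists an independent set A of G with |A| = k + 1 and u, v ∈ A. Then H is connected. (H is the 1-skeleton of the pure complex Δ^{[k]} spanned by the k-dimensional faces of the independence complex of G.) -/
/-- The circulant graph `C_n(S)`: vertices `ZMod n`, with distinct `i, j` adjacent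
iff `|i - j|_n = min ((i-j).val, n - (i-j).val) ∈ S`. -/
def circulant (n : ℕ) (S : Finset ℕ) : SimpleGraph (ZMod n) where
  Adj i j := i ≠ j ∧ min ((i - j).val) (n - (i - j).val) ∈ S
  symm := ⟨by
    rintro i j ⟨hne, hmem⟩
    refine ⟨hne.symm, ?_⟩
    rcases Nat.eq_zero_or_pos n with rfl | hn
    · simpa using hmem
    · haveI : NeZero n := ⟨hn.ne'⟩
      have h1 : j - i = -(i - j) := by ring
      have h0 : i - j ≠ 0 := sub_ne_zero.mpr hne
      rw [h1, ZMod.neg_val, if_neg h0,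
        Nat.sub_sub_self (le_of_lt (ZMod.val_lt _)), min_comm]
      exact hmem⟩
  loopless := ⟨fun i h => h.1 rfl⟩

/-- `Nk n S k` is the number of independent sets of cardinality `k`
in the circulant graph `C_n(S)`. -/
noncomputable def Nk (n : ℕ) (S : Finset ℕ) (k : ℕ) : ℕ :=
  {A : Finset (ZMod n) | A.card = k ∧ ∀ u ∈ A, ∀ v ∈ A, ¬ (circulant n S).Adj u v}.ncard

/-- The 1-skeleton of the pure complex `Δ^{[k]}` spanned by the `k`-dimensional faces of
the independence complex of `C_n(S)`: distinct `u, v` are adjacent iff some independent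
set of `C_n(S)` of cardinality `k + 1` contains both. -/
def skel (n : ℕ) (S : Finset ℕ) (k : ℕ) : SimpleGraph (ZMod n) where
  Adj u v := u ≠ v ∧ ∃ A : Finset (ZMod n), A.card = k + 1 ∧
    (∀ x ∈ A, ∀ y ∈ A, ¬ (circulant n S).Adj x y) ∧ u ∈ A ∧ v ∈ A
  symm := ⟨by
    rintro u v ⟨hne, A, h1, h2, h3, h4⟩
    exact ⟨hne.symm, A, h1, h2, h4, h3⟩⟩
  loopless := ⟨fun u h => h.1 rfl⟩

/-!
Translations are automorphisms of `C_n(S)`. Translating an independent `(k+1)`-set that contains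
`u ≠ v` by `x - u` shows that every `x` is adjacent in the skeleton to `x + d`, where `d = v - u ≠ 0`.
As `n` is prime, `d` generates `ZMod n`, so the walk `x, x + d, x + 2d, …` reaches every vertex.
-/

theorem circulant_adj_add_right {n : ℕ} {S : Finset ℕ} {a b : ZMod n} (c : ZMod n) :
    (circulant n S).Adj (a + c) (b + c) ↔ (circulant n S).Adj a b := by
  simp only [circulant, add_sub_add_right_eq_sub, ne_eq, add_left_inj]

theorem skel_adj_add_sub {n : ℕ} {S : Finset ℕ} {k : ℕ} {A : Finset (ZMod n)}
    (hcard : A.card = k + 1) (hind : ∀ x ∈ A, ∀ y ∈ A, ¬ (circulant n S).Adj x y)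
    {u v : ZMod n} (hu : u ∈ A) (hv : v ∈ A) (huv : u ≠ v) (x : ZMod n) :
    (skel n S k).Adj x (x + (v - u)) := by
  refine ⟨by simpa [sub_eq_zero] using huv.symm, A.image (· + (x - u)), ?_, ?_,
    Finset.mem_image.mpr ⟨u, hu, by abel⟩, Finset.mem_image.mpr ⟨v, hv, by abel⟩⟩
  · rw [Finset.card_image_of_injective _ (add_left_injective _), hcard]
  · simp only [Finset.mem_image]
    rintro _ ⟨a, ha, rfl⟩ _ ⟨b, hb, rfl⟩
    rw [circulant_adj_add_right]
    exact hind a ha b hb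

theorem SimpleGraph.reachable_add_nsmul {α : Type*} [AddMonoid α] {G : SimpleGraph α} {d : α}
    (h : ∀ x, G.Adj x (x + d)) (a : α) (m : ℕ) : G.Reachable a (a + m • d) := by
  induction m with
  | zero => simp
  | succ m ih => exact ih.trans (by simpa [succ_nsmul, add_assoc] using (h (a + m • d)).reachable)

theorem SimpleGraph.connected_of_forall_adj_add {p : ℕ} [Fact p.Prime] {G : SimpleGraph (ZMod p)}
    {d : ZMod p} (hd : d ≠ 0) (h : ∀ x, G.Adj x (x + d)) : G.Connected := by
  refine ⟨fun a b => ?_⟩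
  have hb : a + ((b - a) / d).val • d = b := by
    rw [nsmul_eq_mul, ZMod.natCast_zmod_val, div_mul_cancel₀ _ hd, add_sub_cancel]
  exact hb ▸ G.reachable_add_nsmul h a _

theorem stmt7_general (n : ℕ) (hp : n.Prime) (S : Finset ℕ)
    (k : ℕ) (hk : 1 ≤ k)
    (hex : ∃ A : Finset (ZMod n), A.card = k + 1 ∧
      ∀ x ∈ A, ∀ y ∈ A, ¬ (circulant n S).Adj x y) :
    (skel n S k).Connected := by
  have : Fact n.Prime := ⟨hp⟩
  obtain ⟨A, hcard, hind⟩ := hex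
  obtain ⟨u, hu, v, hv, huv⟩ := Finset.one_lt_card.mp (by omega : 1 < A.card)
  exact SimpleGraph.connected_of_forall_adj_add (sub_ne_zero.mpr huv.symm)
    (skel_adj_add_sub hcard hind hu hv huv)

/-- For `n` prime and `k ≥ 1`, if `C_n(S)` has an independent set of cardinality `k + 1`,
then the 1-skeleton of `Δ^{[k]}` is connected. -/
theorem stmt7 (n : ℕ) (hp : n.Prime) (S : Finset ℕ) (hS : S ⊆ Finset.Icc 1 (n / 2))
    (k : ℕ) (hk : 1 ≤ k)
    (hex : ∃ A : Finset (ZMod n), A.card = k + 1 ∧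
      ∀ x ∈ A, ∀ y ∈ A, ¬ (circulant n S).Adj x y) :
    (skel n S k).Connected :=
  stmt7_general n hp S k hk hex
end

section
/- Let n ≥ 2, S ⊆ {1, …, ⌊n/2⌋}, G = C_n(S), and S̄ = {1, …, ⌊n/2⌋} \ S. The following are equivalent: (1) the complement graph of G (which equals C_n(S̄)) is connected, and G has no independent set of cardinality 3 (equivalently, the independence complex Δ(G) is connected of dimension 1); (2) gcd(n, S̄) = 1 (the gcd of n together with the elements of S̄ is 1) and for all a, b ∈ S̄ one has b − a ∉ S̄ and n − (b + a) ∉ S̄. -/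
/-! The complement of `C_n(S)` is `C_n(S̄)`, so both conditions concern `C_n(S̄)`.
Since circulant graphs are invariant under translation and negation, the vertices reachable
from `0` in `C_n(S̄)` form the subgroup of `ℤ/n` generated by `S̄`, which is everything iff
`gcd(n, S̄) = 1`. A triangle of `C_n(S̄)` can be translated to `{0, x, y}`; if `a, b` are the
circular distances of `x, y`, then that of `x - y` is `|b - a|`, `a + b` or `n - (a + b)`, so
triangles correspond exactly to the forbidden patterns `b - a ∈ S̄`, `n - (b + a) ∈ S̄`. -/

open SimpleGraph

theorem SimpleGraph.cliqueFree_compl_iff_not_exists {V : Type*} (G : SimpleGraph V) (k : ℕ) :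
    Gᶜ.CliqueFree k ↔ ¬ ∃ A : Finset V, A.card = k ∧ ∀ u ∈ A, ∀ v ∈ A, ¬ G.Adj u v := by
  simp only [cliqueFree_compl, IndepSetFree, isNIndepSet_iff, isIndepSet_iff, Set.Pairwise,
    Finset.mem_coe, not_exists, not_and]
  refine forall_congr' fun A => ?_
  constructor
  · intro h hA hind
    exact h (fun u hu v hv _ => hind u hu v hv) hA
  · intro h hind hA
    refine h hA fun u hu v hv => ?_
    rcases eq_or_ne u v with rfl | huv
    · exact G.irrefl
    · exact hind hu hv huv

theorem natCast_gcd_mem {R : Type*} [CommRing R] (H : AddSubgroup R) {a b : ℕ}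
    (ha : (a : R) ∈ H) (hb : (b : R) ∈ H) : (Nat.gcd a b : R) ∈ H := by
  have hbezout : (Nat.gcd a b : R) = Nat.gcdA a b • (a : R) + Nat.gcdB a b • (b : R) := by
    have h := congrArg (Int.cast : ℤ → R) (Nat.gcd_eq_gcd_ab a b)
    push_cast at h
    rw [h, zsmul_eq_mul, zsmul_eq_mul]
    ring
  rw [hbezout]
  exact add_mem (zsmul_mem ha _) (zsmul_mem hb _)

theorem natCast_finsetGcd_mem {R : Type*} [CommRing R] (H : AddSubgroup R) (s : Finset ℕ)
    (h : ∀ t ∈ s, (t : R) ∈ H) : ((s.gcd id : ℕ) : R) ∈ H := by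
  induction s using Finset.induction with
  | empty => simp
  | insert a s ha ih =>
    rw [Finset.gcd_insert]
    exact natCast_gcd_mem H (h a (Finset.mem_insert_self a s))
      (ih fun t ht => h t (Finset.mem_insert_of_mem ht))

variable {n : ℕ}

def circDist (n : ℕ) (x : ZMod n) : ℕ := min x.val (n - x.val)

@[simp] theorem circDist_zero : circDist n 0 = 0 := by simp [circDist]

theorem circulant_adj_iff {S : Finset ℕ} {u v : ZMod n} :
    (circulant n S).Adj u v ↔ u ≠ v ∧ circDist n (u - v) ∈ S := Iff.rfl

theorem circulant_adj_iff_of_zero_notMem {S : Finset ℕ} (h0 : 0 ∉ S) {u v : ZMod n} :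
    (circulant n S).Adj u v ↔ circDist n (u - v) ∈ S :=
  ⟨And.right, fun h => ⟨fun huv => h0 (by rwa [huv, sub_self, circDist_zero] at h), h⟩⟩

def jumpSubgroup (n : ℕ) (T : Finset ℕ) : AddSubgroup (ZMod n) :=
  AddSubgroup.closure ((Nat.cast : ℕ → ZMod n) '' T)

theorem jumpSubgroup_eq_top_iff (T : Finset ℕ) :
    jumpSubgroup n T = ⊤ ↔ Nat.gcd n (T.gcd id) = 1 := by
  set g := T.gcd id
  constructor
  · intro htop
    let φ : ZMod n →+ ZMod (Nat.gcd n g) := (ZMod.castHom (Nat.gcd_dvd_left n g) _).toAddMonoidHom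
    have hker : jumpSubgroup n T ≤ φ.ker := by
      refine AddSubgroup.closure_le _ |>.mpr ?_
      rintro _ ⟨t, ht, rfl⟩
      simp only [SetLike.mem_coe, AddMonoidHom.mem_ker, φ, RingHom.toAddMonoidHom_eq_coe,
        AddMonoidHom.coe_coe, map_natCast, ZMod.natCast_eq_zero_iff]
      exact (Nat.gcd_dvd_right n g).trans (Finset.gcd_dvd (f := id) ht)
    have h1 := hker (htop ▸ AddSubgroup.mem_top (1 : ZMod n))
    simp only [AddMonoidHom.mem_ker, φ, RingHom.toAddMonoidHom_eq_coe, AddMonoidHom.coe_coe,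
      map_one] at h1
    rw [← Nat.cast_one, ZMod.natCast_eq_zero_iff] at h1
    exact Nat.dvd_one.mp h1
  · intro hg
    have hmem : (g : ZMod n) ∈ jumpSubgroup n T :=
      natCast_finsetGcd_mem _ T fun t ht => AddSubgroup.subset_closure ⟨t, ht, rfl⟩
    have hunit : IsUnit (g : ZMod n) := (ZMod.isUnit_iff_coprime g n).mpr (Nat.Coprime.symm hg)
    refine (AddSubgroup.eq_top_iff' _).mpr fun v => ?_
    obtain ⟨k, hk⟩ := ZMod.intCast_surjective (v * ((hunit.unit⁻¹ : (ZMod n)ˣ) : ZMod n))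
    have hv : v = k • (g : ZMod n) := by
      rw [zsmul_eq_mul, hk, mul_assoc, IsUnit.val_inv_mul, mul_one]
    rw [hv]
    exact zsmul_mem hmem k

section NeZero

variable [NeZero n] {T : Finset ℕ}

theorem circDist_neg (x : ZMod n) : circDist n (-x) = circDist n x := by
  rcases eq_or_ne x 0 with rfl | hx
  · rw [neg_zero]
  · have := x.val_lt
    rw [circDist, circDist, ZMod.neg_val, if_neg hx]
    omega

theorem circDist_mem_Icc {x : ZMod n} (hx : x ≠ 0) : circDist n x ∈ Finset.Icc 1 (n / 2) := by
  have := x.val_lt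
  have := (ZMod.val_pos).mpr hx
  simp only [circDist, Finset.mem_Icc]
  omega

theorem circDist_natCast {t : ℕ} (ht : t ≤ n / 2) : circDist n t = t := by
  have := NeZero.pos n
  rw [circDist, ZMod.val_cast_of_lt (by omega)]
  omega

theorem natCast_circDist (x : ZMod n) :
    (circDist n x : ZMod n) = x ∨ (circDist n x : ZMod n) = -x := by
  rcases min_choice x.val (n - x.val) with h | h <;> rw [circDist, h]
  · exact Or.inl (ZMod.natCast_zmod_val x)
  · right
    rw [Nat.cast_sub x.val_le, ZMod.natCast_self, ZMod.natCast_zmod_val, zero_sub]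

theorem circDist_sub (x y : ZMod n) :
    circDist n (x - y) = circDist n y - circDist n x ∨
      circDist n (x - y) = circDist n x - circDist n y ∨
      circDist n (x - y) = circDist n x + circDist n y ∨
      circDist n (x - y) = n - (circDist n y + circDist n x) := by
  wlog h : y.val ≤ x.val generalizing x y
  · rw [← circDist_neg, neg_sub]
    rcases this y x (by omega) with h | h | h | h <;> omega
  have := ZMod.val_sub h
  have := x.val_lt
  simp only [circDist]
  omega

theorem compl_circulant (S : Finset ℕ) :
    (circulant n S)ᶜ = circulant n (Finset.Icc 1 (n / 2) \ S) := by
  ext u v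
  simp only [compl_adj, circulant_adj_iff, Finset.mem_sdiff]
  constructor
  · rintro ⟨huv, hS⟩
    exact ⟨huv, circDist_mem_Icc (sub_ne_zero.mpr huv), fun h => hS ⟨huv, h⟩⟩
  · rintro ⟨huv, -, hS⟩
    exact ⟨huv, fun h => hS h.2⟩

theorem sub_mem_jumpSubgroup_of_adj {u v : ZMod n} (h : (circulant n T).Adj u v) :
    u - v ∈ jumpSubgroup n T := by
  have hjump : (circDist n (u - v) : ZMod n) ∈ jumpSubgroup n T :=
    AddSubgroup.subset_closure ⟨_, h.2, rfl⟩
  rcases natCast_circDist (u - v) with h' | h'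
  · rwa [← h']
  · rw [← neg_neg (u - v), ← h']
    exact neg_mem hjump

theorem circulant_reachable_zero_iff (hT : T ⊆ Finset.Icc 1 (n / 2)) {v : ZMod n} :
    (circulant n T).Reachable 0 v ↔ v ∈ jumpSubgroup n T := by
  have h0 : 0 ∉ T := fun h => by simpa using hT h
  have hjump : ∀ t ∈ T, circDist n t = t := fun t ht =>
    circDist_natCast (Finset.mem_Icc.mp (hT ht)).2
  constructor
  · rw [reachable_iff_reflTransGen]
    intro h
    induction h with
    | refl => exact zero_mem _
    | tail _ hadj ih => simpa using sub_mem ih (sub_mem_jumpSubgroup_of_adj hadj)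
  · intro hv
    induction hv using AddSubgroup.closure_induction_left with
    | zero => rfl
    | add_left x hx y _ ih =>
      obtain ⟨t, ht, rfl⟩ := hx
      refine ih.trans (Adj.reachable ((circulant_adj_iff_of_zero_notMem h0).mpr ?_))
      rwa [sub_add_cancel_right, circDist_neg, hjump t ht]
    | neg_add_cancel x hx y _ ih =>
      obtain ⟨t, ht, rfl⟩ := hx
      refine ih.trans (Adj.reachable ((circulant_adj_iff_of_zero_notMem h0).mpr ?_))
      rwa [sub_add_cancel_right, neg_neg, hjump t ht]

theorem circulant_connected_iff (hT : T ⊆ Finset.Icc 1 (n / 2)) :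
    (circulant n T).Connected ↔ Nat.gcd n (T.gcd id) = 1 := by
  rw [← jumpSubgroup_eq_top_iff, AddSubgroup.eq_top_iff', connected_iff_exists_forall_reachable]
  simp_rw [← circulant_reachable_zero_iff hT]
  exact ⟨fun ⟨u, hu⟩ v => (hu 0).symm.trans (hu v), fun h => ⟨0, h⟩⟩

theorem circulant_not_cliqueFree_three (h0 : 0 ∉ T) {x y : ZMod n} (hx : circDist n x ∈ T)
    (hy : circDist n y ∈ T) (hxy : circDist n (x - y) ∈ T) : ¬ (circulant n T).CliqueFree 3 := by
  intro hfree
  refine hfree {0, x, y} (is3Clique_triple_iff.mpr ?_)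
  simp only [circulant_adj_iff_of_zero_notMem h0, zero_sub, circDist_neg]
  exact ⟨hx, hy, hxy⟩

theorem circulant_cliqueFree_three_iff (hT : T ⊆ Finset.Icc 1 (n / 2)) :
    (circulant n T).CliqueFree 3 ↔ ∀ a ∈ T, ∀ b ∈ T, b - a ∉ T ∧ n - (b + a) ∉ T := by
  have h0 : 0 ∉ T := fun h => by simpa using hT h
  have hle : ∀ t ∈ T, 1 ≤ t ∧ t ≤ n / 2 := fun t ht => Finset.mem_Icc.mp (hT ht)
  have hjump : ∀ t ∈ T, circDist n t = t := fun t ht => circDist_natCast (hle t ht).2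
  constructor
  · intro hfree a ha b hb
    constructor
    · intro hba
      have hab : a ≤ b := by have := hle _ hba; omega
      refine circulant_not_cliqueFree_three h0 (x := a) (y := b) ?_ ?_ ?_ hfree
      · rwa [hjump a ha]
      · rwa [hjump b hb]
      · rwa [← neg_sub, circDist_neg, ← Nat.cast_sub hab, hjump _ hba]
    · intro hnba
      have hba : b + a ≤ n := by have := hle _ hnba; omega
      refine circulant_not_cliqueFree_three h0 (x := a) (y := -(b : ZMod n)) ?_ ?_ ?_ hfree
      · rwa [hjump a ha]
      · rwa [circDist_neg, hjump b hb]
      · have hcast : (a : ZMod n) - -b = -((n - (b + a) : ℕ) : ZMod n) := by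
          rw [Nat.cast_sub hba, ZMod.natCast_self]
          push_cast
          ring
        rwa [hcast, circDist_neg, hjump _ hnba]
  · intro h s hs
    obtain ⟨u, v, w, huv, huw, hvw, rfl⟩ := is3Clique_iff.mp hs
    simp only [circulant_adj_iff_of_zero_notMem h0] at huv huw hvw
    rw [show v - w = (u - w) - (u - v) by abel] at hvw
    rcases circDist_sub (u - w) (u - v) with hc | hc | hc | hc <;> rw [hc] at hvw
    · exact (h _ huw _ huv).1 hvw
    · exact (h _ huv _ huw).1 hvw
    · exact (h _ huw _ hvw).1 (by rwa [Nat.add_sub_cancel_left])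
    · exact (h _ huw _ huv).2 hvw

end NeZero

theorem stmt12_general (n : ℕ) (hn : 2 ≤ n) (S : Finset ℕ) :
    ((circulant n S)ᶜ.Connected ∧
      ¬ ∃ A : Finset (ZMod n), A.card = 3 ∧ ∀ u ∈ A, ∀ v ∈ A, ¬ (circulant n S).Adj u v)
    ↔
    (Nat.gcd n ((Finset.Icc 1 (n / 2) \ S).gcd id) = 1 ∧
      ∀ a ∈ Finset.Icc 1 (n / 2) \ S, ∀ b ∈ Finset.Icc 1 (n / 2) \ S,
        (b - a) ∉ Finset.Icc 1 (n / 2) \ S ∧ (n - (b + a)) ∉ Finset.Icc 1 (n / 2) \ S) := by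
  have : NeZero n := ⟨by omega⟩
  rw [← cliqueFree_compl_iff_not_exists, compl_circulant,
    circulant_connected_iff Finset.sdiff_subset, circulant_cliqueFree_three_iff Finset.sdiff_subset]

/-- Characterization of Cohen–Macaulay circulant graphs of Krull dimension 2:
the complement of `C_n(S)` is connected and `C_n(S)` has no independent 3-set
iff `gcd(n, S̄) = 1` and for all `a, b ∈ S̄` one has `b − a ∉ S̄` and `n − (b + a) ∉ S̄`. -/
theorem stmt12 (n : ℕ) (hn : 2 ≤ n) (S : Finset ℕ) (hS : S ⊆ Finset.Icc 1 (n / 2)) :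
    ((circulant n S)ᶜ.Connected ∧
      ¬ ∃ A : Finset (ZMod n), A.card = 3 ∧ ∀ u ∈ A, ∀ v ∈ A, ¬ (circulant n S).Adj u v)
    ↔
    (Nat.gcd n ((Finset.Icc 1 (n / 2) \ S).gcd id) = 1 ∧
      ∀ a ∈ Finset.Icc 1 (n / 2) \ S, ∀ b ∈ Finset.Icc 1 (n / 2) \ S,
        (b - a) ∉ Finset.Icc 1 (n / 2) \ S ∧ (n - (b + a)) ∉ Finset.Icc 1 (n / 2) \ S) :=
  stmt12_general n hn S
end
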